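/- arXiv:1803.01272 — 4 statements merged into one kernel-verified Lean document; each statement's English description precedes it below -/
import Mathlib

section
/- In the setting of the abstract Hodge theory proposition (densely defined closed operators T: H₁ → H₂, S: H₂ → H₃ with ST = 0, and closed ranges Im(S), Im(T)), the kernel of Δ = S*S + TT* equals Ker(T*) ∩ Ker(S), and the orthogonal complement of Ker(Δ) in H₂ equals the image of Δ. -/
/-!
Pairing `Δ x` with `x` gives `‖S x‖² + ‖T* x‖²`, so `Ker Δ = Ker T* ∩ Ker S`; pairing `Δ x` with a
harmonic `y` in the same way shows `Im Δ ⊥ Ker Δ`.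

Conversely, `Im T ⊆ Ker S` and `(Im T)ᗮ ⊆ Ker T*` give `Ker S ∩ (Im T)ᗮ ⊆ Ker Δ`, so every
`x ⊥ Ker Δ` splits as an element of `Im T` plus one of `(Ker S)ᗮ`. Both summands lie in `Im Δ` by
the closed range theorem: if `A` is closed, densely defined and has closed range, every `x ⊥ Ker A`
is `A* w` for some `w ∈ Im A`, because the functional `A u ↦ ⟪x, u⟫` is bounded by the open mapping
theorem and the Riesz representation of it is such a `w`. For `x = T u` with `u ⊥ Ker T` this gives
`w ∈ Im T ⊆ Ker S` with `T* w = u`, hence `Δ w = x`; for `x ⊥ Ker S` it gives `x = S* (S v)` with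
`v ⊥ Ker S ⊇ Im T`, hence `T* v = 0` and `Δ v = x`.
-/

open scoped InnerProductSpace

theorem ContinuousLinearMap.exists_comp_eq_of_ker_le {𝕜 E F G : Type*} [NontriviallyNormedField 𝕜]
    [NormedAddCommGroup E] [NormedSpace 𝕜 E] [CompleteSpace E]
    [NormedAddCommGroup F] [NormedSpace 𝕜 F] [CompleteSpace F]
    [NormedAddCommGroup G] [NormedSpace 𝕜 G]
    (f : E →L[𝕜] F) (hf : Function.Surjective f) (g : E →L[𝕜] G)
    (hker : f.ker ≤ g.ker) : ∃ φ : F →L[𝕜] G, φ.comp f = g := by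
  choose s hs using hf
  have hgs : ∀ x, g (s (f x)) = g x := fun x => by
    have : s (f x) - x ∈ f.ker := by simp [hs]
    simpa [sub_eq_zero] using hker this
  let φ : F →ₗ[𝕜] G :=
    { toFun := fun y => g (s y)
      map_add' := fun a b => by simpa [hs] using hgs (s a + s b)
      map_smul' := fun c a => by simpa [hs] using hgs (c • s a) }
  have hφf : (φ : F → G) ∘ f = g := funext hgs
  exact ⟨⟨φ, (f.isQuotientMap fun y => ⟨s y, hs y⟩).continuous_iff.2 (hφf ▸ g.continuous)⟩,
    ContinuousLinearMap.ext hgs⟩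

theorem Submodule.orthogonal_inf_orthogonal_le_sup {𝕜 E : Type*} [RCLike 𝕜]
    [NormedAddCommGroup E] [InnerProductSpace 𝕜 E] {M K : Submodule 𝕜 E}
    [M.HasOrthogonalProjection] [K.HasOrthogonalProjection] (hMK : M ≤ K) :
    (K ⊓ Mᗮ)ᗮ ≤ M ⊔ Kᗮ := by
  intro x hx
  have hm : M.starProjection x ∈ M := M.starProjection_apply_mem x
  have hk : x - K.starProjection x ∈ Kᗮ := K.sub_starProjection_mem_orthogonal x
  have hn : K.starProjection x - M.starProjection x ∈ K ⊓ Mᗮ := by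
    refine ⟨sub_mem (K.starProjection_apply_mem x) (hMK hm), ?_⟩
    rw [← sub_sub_sub_cancel_left _ _ x]
    exact sub_mem (M.sub_starProjection_mem_orthogonal x) (Submodule.orthogonal_le hMK hk)
  have hn0 : K.starProjection x - M.starProjection x = 0 := by
    rw [← inner_self_eq_zero (𝕜 := 𝕜)]
    nth_rw 1 [show K.starProjection x - M.starProjection x
      = x - M.starProjection x - (x - K.starProjection x) by abel]
    rw [inner_sub_left, inner_sub_left, (Submodule.mem_orthogonal' _ x).1 hx _ hn,
      Submodule.inner_right_of_mem_orthogonal hm hn.2,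
      Submodule.inner_left_of_mem_orthogonal hn.1 hk, sub_zero, sub_zero]
  have hx : x = M.starProjection x + (x - K.starProjection x) := by
    rw [sub_eq_zero.1 hn0]; abel
  exact hx ▸ Submodule.add_mem_sup hm hk

namespace LinearPMap

section Algebraic

variable {R E F : Type*} [CommRing R] [AddCommGroup E] [Module R E] [AddCommGroup F] [Module R F]

def ker (A : E →ₗ.[R] F) : Submodule R E := (LinearMap.ker A.toFun).map A.domain.subtype

def range (A : E →ₗ.[R] F) : Submodule R F := LinearMap.range A.toFun

variable {A : E →ₗ.[R] F}

theorem mem_ker {x : E} : x ∈ A.ker ↔ ∃ hx : x ∈ A.domain, A ⟨x, hx⟩ = 0 := by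
  simp only [ker, Submodule.mem_map, LinearMap.mem_ker]
  constructor
  · rintro ⟨u, hu, rfl⟩
    exact ⟨u.2, hu⟩
  · rintro ⟨hx, hx0⟩
    exact ⟨⟨x, hx⟩, hx0, rfl⟩

@[simp]
theorem apply_mk_zero (h : (0 : E) ∈ A.domain) : A ⟨0, h⟩ = 0 := A.map_zero

theorem apply_mem_range (u : A.domain) : A u ∈ A.range := ⟨u, rfl⟩

theorem isClosed_ker [TopologicalSpace E] [TopologicalSpace F] (hA : A.IsClosed) :
    _root_.IsClosed (A.ker : Set E) := by
  have : (A.ker : Set E) = (fun x => (x, (0 : F))) ⁻¹' A.graph := by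
    ext x
    simp only [SetLike.mem_coe, mem_ker, Set.mem_preimage, mem_graph_iff]
    constructor
    · rintro ⟨hx, hx0⟩
      exact ⟨⟨x, hx⟩, rfl, hx0⟩
    · rintro ⟨u, rfl, hu⟩
      exact ⟨u.2, hu⟩
  rw [this]
  exact hA.preimage (continuous_id.prodMk continuous_const)

end Algebraic

variable {𝕜 E F : Type*} [RCLike 𝕜] [NormedAddCommGroup E] [InnerProductSpace 𝕜 E]
  [NormedAddCommGroup F] [InnerProductSpace 𝕜 F] [CompleteSpace E] {A : E →ₗ.[𝕜] F}

theorem exists_mem_orthogonal_ker_apply_eq (hA : A.IsClosed) (u : A.domain) :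
    ∃ v : A.domain, (v : E) ∈ A.kerᗮ ∧ A v = A u := by
  have : CompleteSpace A.ker := (isClosed_ker hA).completeSpace_coe
  obtain ⟨hp, hp0⟩ := mem_ker.1 (A.ker.starProjection_apply_mem u)
  refine ⟨u - ⟨_, hp⟩, A.ker.sub_starProjection_mem_orthogonal (u : E), ?_⟩
  rw [map_sub, hp0, sub_zero]

theorem orthogonal_range_le_ker_adjoint (hA : Dense (A.domain : Set E)) : A.rangeᗮ ≤ A†.ker := by
  intro y hy
  have hinner : ∀ u : A.domain, ⟪(0 : E), u⟫_𝕜 = ⟪y, A u⟫_𝕜 := fun u => by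
    rw [inner_zero_left, (Submodule.mem_orthogonal' _ y).1 hy _ (apply_mem_range u)]
  have hy' : y ∈ A†.domain := mem_adjoint_domain_of_exists y ⟨0, hinner⟩
  exact mem_ker.2 ⟨hy', adjoint_apply_eq hA ⟨y, hy'⟩ hinner⟩

theorem exists_mem_range_adjoint_eq [CompleteSpace F] (hdense : Dense (A.domain : Set E))
    (hA : A.IsClosed) (hrange : _root_.IsClosed (A.range : Set F)) {x : E} (hx : x ∈ A.kerᗮ) :
    ∃ w ∈ A.range, ∃ hw : w ∈ A†.domain, A† ⟨w, hw⟩ = x := by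
  have : CompleteSpace A.range := hrange.completeSpace_coe
  have : CompleteSpace A.graph := hA.completeSpace_coe
  let f : A.graph →L[𝕜] A.range :=
    ((ContinuousLinearMap.snd 𝕜 E F).comp A.graph.subtypeL).codRestrict A.range fun p => by
      obtain ⟨u, -, hu⟩ := A.mem_graph_iff.1 p.2
      exact ⟨u, hu⟩
  have hf : Function.Surjective f := by
    rintro ⟨-, u, rfl⟩
    exact ⟨⟨_, A.mem_graph u⟩, rfl⟩
  let g : A.graph →L[𝕜] 𝕜 :=
    (innerSL 𝕜 x).comp ((ContinuousLinearMap.fst 𝕜 E F).comp A.graph.subtypeL)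
  -- the functional `A u ↦ ⟪x, u⟫` is well defined on the range because `x ⊥ ker A`
  have hker : f.ker ≤ g.ker := by
    intro p hp
    obtain ⟨u, hu1, hu2⟩ := A.mem_graph_iff.1 p.2
    have hAu : A u = 0 := hu2.trans (congrArg Subtype.val hp)
    simpa [g, ← hu1] using (Submodule.mem_orthogonal' _ x).1 hx _ (mem_ker.2 ⟨u.2, hAu⟩)
  obtain ⟨φ, hφ⟩ := f.exists_comp_eq_of_ker_le hf g hker
  let w : A.range := (InnerProductSpace.toDual 𝕜 A.range).symm φ
  have hw : ∀ u : A.domain, ⟪x, u⟫_𝕜 = ⟪(w : F), A u⟫_𝕜 := fun u =>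
    calc ⟪x, u⟫_𝕜 = g ⟨_, A.mem_graph u⟩ := rfl
      _ = φ (f ⟨_, A.mem_graph u⟩) := by rw [← hφ]; rfl
      _ = ⟪w, f ⟨_, A.mem_graph u⟩⟫_𝕜 := InnerProductSpace.toDual_symm_apply.symm
      _ = ⟪(w : F), A u⟫_𝕜 := rfl
  have hwdom : (w : F) ∈ A†.domain := mem_adjoint_domain_of_exists _ ⟨x, hw⟩
  exact ⟨w, w.2, hwdom, adjoint_apply_eq hdense ⟨w, hwdom⟩ hw⟩

end LinearPMap

section Hodge

open LinearPMap

variable {𝕜 H₁ H₂ H₃ : Type*} [RCLike 𝕜]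
  [NormedAddCommGroup H₁] [InnerProductSpace 𝕜 H₁] [CompleteSpace H₁]
  [NormedAddCommGroup H₂] [InnerProductSpace 𝕜 H₂] [CompleteSpace H₂]
  [NormedAddCommGroup H₃] [InnerProductSpace 𝕜 H₃]

structure IsHodgeLaplacian (T : H₁ →ₗ.[𝕜] H₂) (S : H₂ →ₗ.[𝕜] H₃) (Δ : H₂ →ₗ.[𝕜] H₂) :
    Prop where
  mem_domain_iff : ∀ x : H₂, x ∈ Δ.domain ↔
    ∃ (h1 : x ∈ S.domain) (h2 : x ∈ T†.domain), T† ⟨x, h2⟩ ∈ T.domain ∧ S ⟨x, h1⟩ ∈ S†.domain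
  apply_eq : ∀ (x : H₂) (hx : x ∈ Δ.domain) (h1 : x ∈ S.domain) (h2 : x ∈ T†.domain)
    (h3 : T† ⟨x, h2⟩ ∈ T.domain) (h4 : S ⟨x, h1⟩ ∈ S†.domain),
    Δ ⟨x, hx⟩ = S† ⟨S ⟨x, h1⟩, h4⟩ + T ⟨T† ⟨x, h2⟩, h3⟩

namespace IsHodgeLaplacian

variable {T : H₁ →ₗ.[𝕜] H₂} {S : H₂ →ₗ.[𝕜] H₃} {Δ : H₂ →ₗ.[𝕜] H₂}

theorem exists_apply_eq (hΔ : IsHodgeLaplacian T S Δ) {x : H₂} (h1 : x ∈ S.domain)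
    (h2 : x ∈ T†.domain) (h3 : T† ⟨x, h2⟩ ∈ T.domain) (h4 : S ⟨x, h1⟩ ∈ S†.domain) :
    ∃ hx : x ∈ Δ.domain, Δ ⟨x, hx⟩ = S† ⟨S ⟨x, h1⟩, h4⟩ + T ⟨T† ⟨x, h2⟩, h3⟩ :=
  ⟨(hΔ.mem_domain_iff x).2 ⟨h1, h2, h3, h4⟩, hΔ.apply_eq x _ h1 h2 h3 h4⟩

theorem inner_apply (hΔ : IsHodgeLaplacian T S Δ) (hT : Dense (T.domain : Set H₁))
    (hS : Dense (S.domain : Set H₂)) {x y : H₂} (hx : x ∈ Δ.domain) (hx₁ : x ∈ S.domain)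
    (hx₂ : x ∈ T†.domain) (hy₁ : y ∈ S.domain) (hy₂ : y ∈ T†.domain) :
    ⟪Δ ⟨x, hx⟩, y⟫_𝕜 = ⟪S ⟨x, hx₁⟩, S ⟨y, hy₁⟩⟫_𝕜 + ⟪T† ⟨x, hx₂⟩, T† ⟨y, hy₂⟩⟫_𝕜 := by
  obtain ⟨_, _, h3, h4⟩ := (hΔ.mem_domain_iff x).1 hx
  rw [hΔ.apply_eq x hx hx₁ hx₂ h3 h4, inner_add_left, adjoint_isFormalAdjoint hS _ ⟨y, hy₁⟩,
    (adjoint_isFormalAdjoint hT).symm ⟨_, h3⟩ ⟨y, hy₂⟩]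

theorem mem_ker_iff (hΔ : IsHodgeLaplacian T S Δ) (hT : Dense (T.domain : Set H₁))
    (hS : Dense (S.domain : Set H₂)) {x : H₂} : x ∈ Δ.ker ↔ x ∈ T†.ker ∧ x ∈ S.ker := by
  simp only [mem_ker]
  constructor
  · rintro ⟨hx, hx0⟩
    obtain ⟨h1, h2, -, -⟩ := (hΔ.mem_domain_iff x).1 hx
    have hsum := hΔ.inner_apply hT hS hx h1 h2 h1 h2
    rw [hx0, inner_zero_left] at hsum
    have hnorm : ‖S ⟨x, h1⟩‖ ^ 2 + ‖T† ⟨x, h2⟩‖ ^ 2 = 0 := by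
      simpa [← inner_self_eq_norm_sq] using congrArg RCLike.re hsum.symm
    rw [add_eq_zero_iff_of_nonneg (by positivity) (by positivity)] at hnorm
    exact ⟨⟨h2, by simpa using hnorm.2⟩, ⟨h1, by simpa using hnorm.1⟩⟩
  · rintro ⟨⟨h2, hT0⟩, ⟨h1, hS0⟩⟩
    obtain ⟨hx, hΔx⟩ := hΔ.exists_apply_eq h1 h2 (by rw [hT0]; exact zero_mem _)
      (by rw [hS0]; exact zero_mem _)
    exact ⟨hx, by simp [hΔx, hS0, hT0]⟩

theorem range_le_range (hΔ : IsHodgeLaplacian T S Δ) (hT : Dense (T.domain : Set H₁))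
    (hTc : T.IsClosed) (hTr : _root_.IsClosed (T.range : Set H₂)) (hTS : T.range ≤ S.ker) :
    T.range ≤ Δ.range := by
  rintro _ ⟨u, rfl⟩
  obtain ⟨v, hv, hvu⟩ := exists_mem_orthogonal_ker_apply_eq hTc u
  obtain ⟨w, hwr, hw, hwv⟩ := exists_mem_range_adjoint_eq hT hTc hTr hv
  obtain ⟨h1, hS0⟩ := mem_ker.1 (hTS hwr)
  obtain ⟨hx, hΔx⟩ := hΔ.exists_apply_eq h1 hw (by rw [hwv]; exact v.2)
    (by rw [hS0]; exact zero_mem _)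
  refine ⟨⟨w, hx⟩, ?_⟩
  change Δ ⟨w, hx⟩ = _
  simp [hΔx, hS0, hwv, ← hvu]

theorem orthogonal_ker_le_range [CompleteSpace H₃] (hΔ : IsHodgeLaplacian T S Δ)
    (hT : Dense (T.domain : Set H₁)) (hS : Dense (S.domain : Set H₂)) (hSc : S.IsClosed)
    (hSr : _root_.IsClosed (S.range : Set H₃)) (hTS : T.range ≤ S.ker) : S.kerᗮ ≤ Δ.range := by
  intro x hx
  obtain ⟨w, ⟨u, rfl⟩, hw, hwx⟩ := exists_mem_range_adjoint_eq hS hSc hSr hx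
  obtain ⟨v, hv, hvu⟩ := exists_mem_orthogonal_ker_apply_eq hSc u
  obtain ⟨h2, hT0⟩ := mem_ker.1 <|
    orthogonal_range_le_ker_adjoint hT (Submodule.orthogonal_le hTS hv)
  obtain ⟨hx, hΔx⟩ := hΔ.exists_apply_eq v.2 h2 (by rw [hT0]; exact zero_mem _)
    (by rw [hvu]; exact hw)
  refine ⟨⟨v, hx⟩, ?_⟩
  change Δ ⟨v, hx⟩ = _
  simpa [hΔx, hT0, hvu] using hwx

theorem orthogonal_ker_eq_range [CompleteSpace H₃] (hΔ : IsHodgeLaplacian T S Δ)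
    (hT : Dense (T.domain : Set H₁)) (hS : Dense (S.domain : Set H₂)) (hTc : T.IsClosed)
    (hSc : S.IsClosed) (hTr : _root_.IsClosed (T.range : Set H₂))
    (hSr : _root_.IsClosed (S.range : Set H₃)) (hTS : T.range ≤ S.ker) : Δ.kerᗮ = Δ.range := by
  have : CompleteSpace T.range := hTr.completeSpace_coe
  have : CompleteSpace S.ker := (isClosed_ker hSc).completeSpace_coe
  refine le_antisymm ?_ ?_
  · have hker : S.ker ⊓ T.rangeᗮ ≤ Δ.ker := fun x hx =>
      (hΔ.mem_ker_iff hT hS).2 ⟨orthogonal_range_le_ker_adjoint hT hx.2, hx.1⟩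
    calc Δ.kerᗮ ≤ (S.ker ⊓ T.rangeᗮ)ᗮ := Submodule.orthogonal_le hker
      _ ≤ T.range ⊔ S.kerᗮ := Submodule.orthogonal_inf_orthogonal_le_sup hTS
      _ ≤ Δ.range := sup_le (hΔ.range_le_range hT hTc hTr hTS)
        (hΔ.orthogonal_ker_le_range hT hS hSc hSr hTS)
  · rintro _ ⟨p, rfl⟩
    refine (Submodule.mem_orthogonal' _ _).2 fun y hy => ?_
    obtain ⟨hyT, hyS⟩ := (hΔ.mem_ker_iff hT hS).1 hy
    obtain ⟨hy₂, hT0⟩ := mem_ker.1 hyT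
    obtain ⟨hy₁, hS0⟩ := mem_ker.1 hyS
    obtain ⟨hp₁, hp₂, _, _⟩ := (hΔ.mem_domain_iff p).1 p.2
    simpa [hT0, hS0] using hΔ.inner_apply hT hS p.2 hp₁ hp₂ hy₁ hy₂

end IsHodgeLaplacian

end Hodge

/-- Abstract Hodge theory: `Ker Δ = Ker T* ∩ Ker S` and `(Ker Δ)ᗮ = Im Δ`. -/
theorem stmt_5 {H₁ H₂ H₃ : Type*}
    [NormedAddCommGroup H₁] [InnerProductSpace ℂ H₁] [CompleteSpace H₁]
    [NormedAddCommGroup H₂] [InnerProductSpace ℂ H₂] [CompleteSpace H₂]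
    [NormedAddCommGroup H₃] [InnerProductSpace ℂ H₃] [CompleteSpace H₃]
    (T : H₁ →ₗ.[ℂ] H₂) (S : H₂ →ₗ.[ℂ] H₃)
    (hTdense : Dense (T.domain : Set H₁)) (hSdense : Dense (S.domain : Set H₂))
    (hTclosed : T.IsClosed) (hSclosed : S.IsClosed)
    (hImT : ∀ x : T.domain, T x ∈ S.domain)
    (hST : ∀ x : T.domain, S ⟨T x, hImT x⟩ = 0)
    (hSrange : IsClosed (Set.range fun x : S.domain => S x))
    (hTrange : IsClosed (Set.range fun x : T.domain => T x))
    (Δ : H₂ →ₗ.[ℂ] H₂)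
    (hΔdom : ∀ x : H₂, x ∈ Δ.domain ↔
      ∃ (h1 : x ∈ S.domain) (h2 : x ∈ T.adjoint.domain),
        T.adjoint ⟨x, h2⟩ ∈ T.domain ∧ S ⟨x, h1⟩ ∈ S.adjoint.domain)
    (hΔ : ∀ (x : H₂) (hx : x ∈ Δ.domain) (h1 : x ∈ S.domain) (h2 : x ∈ T.adjoint.domain)
        (h3 : T.adjoint ⟨x, h2⟩ ∈ T.domain) (h4 : S ⟨x, h1⟩ ∈ S.adjoint.domain),
        Δ ⟨x, hx⟩ = S.adjoint ⟨S ⟨x, h1⟩, h4⟩ + T ⟨T.adjoint ⟨x, h2⟩, h3⟩) :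
    (∀ x : H₂, (∃ hx : x ∈ Δ.domain, Δ ⟨x, hx⟩ = 0) ↔
      ((∃ h : x ∈ T.adjoint.domain, T.adjoint ⟨x, h⟩ = 0) ∧
        (∃ h : x ∈ S.domain, S ⟨x, h⟩ = 0))) ∧
    (∀ x : H₂,
      (∀ (y : H₂) (hy : y ∈ Δ.domain), Δ ⟨y, hy⟩ = 0 → (inner ℂ x y : ℂ) = 0) ↔
        x ∈ Set.range fun p : Δ.domain => Δ p) := by
  have hL : IsHodgeLaplacian T S Δ := ⟨hΔdom, hΔ⟩
  have hTS : T.range ≤ S.ker := by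
    rintro _ ⟨u, rfl⟩
    exact LinearPMap.mem_ker.2 ⟨hImT u, hST u⟩
  refine ⟨fun x => ?_, fun x => ?_⟩
  · simpa only [LinearPMap.mem_ker] using hL.mem_ker_iff hTdense hSdense (x := x)
  · have h := SetLike.ext_iff.1 (hL.orthogonal_ker_eq_range hTdense hSdense hTclosed hSclosed
      hTrange hSrange hTS) x
    simp only [Submodule.mem_orthogonal', LinearPMap.mem_ker, forall_exists_index] at h
    exact h
end

section
/- Let H be a Hilbert space with a bounded self-adjoint non-negative Green operator G, harmonic projection H₀ (orthogonal projection), and densely defined closed operators ∂̄, ∂ satisfying: ∂̄∂̄*G + ∂̄*∂̄G = I - H₀, G∂̄ = ∂̄G, G∂̄* = ∂̄*G, H₀∂̄ = ∂̄H₀ = 0, H₀∂̄* = ∂̄*H₀ = 0, and G ≥ 0. Then for any g in the domain of ∂, ‖∂̄*G∂g‖² = ‖g‖² - ‖H₀g‖² - ⟨∂*g, G∂*g⟩ - ‖∂̄G∂g‖², and in particular ‖∂̄*G∂g‖² ≤ ‖g‖², provided the analogous Hodge identities hold for ∂ with the same G and H₀ (i.e. □_∂ = □_∂̄). -/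
/-!
The Hodge identity `(∂̄∂̄* + ∂̄*∂̄)G = 1 - H₀` applied to `∂g` (note `H₀∂g = 0`) gives
`‖∂̄*G∂g‖² + ‖∂̄G∂g‖² = Re⟪G∂g, ∂g⟫`. Since `□_∂̄ = □_∂`, the same identity for `∂` tested against
`g` splits `‖g‖² - ‖H₀g‖² = Re⟪g, (1 - H₀)g⟫` as `Re⟪G∂g, ∂g⟫ + Re⟪∂*g, G∂*g⟫`, the two pieces
being moved across by `G∂ = ∂G` and `G∂* = ∂*G`. Positivity of `G` then gives the bound.
-/

open ContinuousLinearMap RCLike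

open scoped InnerProductSpace

namespace ContinuousLinearMap

variable {𝕜 E : Type*} [RCLike 𝕜] [NormedAddCommGroup E] [InnerProductSpace 𝕜 E] [CompleteSpace E]

theorem inner_apply_add_inner_adjoint_apply (D : E →L[𝕜] E) (x y : E) :
    ⟪D x, D y⟫_𝕜 + ⟪adjoint D x, adjoint D y⟫_𝕜 = ⟪x, adjoint D (D y) + D (adjoint D y)⟫_𝕜 := by
  rw [inner_add_right, adjoint_inner_right D x (D y), adjoint_inner_left D (adjoint D y) x]

theorem re_inner_apply_self_eq_norm_sq {P : E →L[𝕜] E} (hP : IsSelfAdjoint P) (hPP : P ∘L P = P)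
    (x : E) : re ⟪x, P x⟫_𝕜 = ‖P x‖ ^ 2 := by
  rw [apply_norm_sq_eq_inner_adjoint_right, hP.adjoint_eq, hPP]

variable {D G P : E →L[𝕜] E}

theorem laplacian_green_apply (hHodge : D ∘L (adjoint D ∘L G) + adjoint D ∘L (D ∘L G) = 1 - P)
    (x : E) : D (adjoint D (G x)) + adjoint D (D (G x)) = x - P x := by
  simpa using congr($hHodge x)

theorem norm_sq_adjoint_green_add_norm_sq_green
    (hHodge : D ∘L (adjoint D ∘L G) + adjoint D ∘L (D ∘L G) = 1 - P) {y : E} (hy : P y = 0) :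
    ‖adjoint D (G y)‖ ^ 2 + ‖D (G y)‖ ^ 2 = re ⟪G y, y⟫_𝕜 := by
  have h := inner_apply_add_inner_adjoint_apply D (G y) (G y)
  rw [add_comm (adjoint D (D (G y))), laplacian_green_apply hHodge, hy, sub_zero] at h
  rw [← h, map_add, inner_self_eq_norm_sq, inner_self_eq_norm_sq, add_comm]

theorem re_inner_green_add_re_inner_adjoint_green
    (hHodge : D ∘L (adjoint D ∘L G) + adjoint D ∘L (D ∘L G) = 1 - P)
    (hGD : G ∘L D = D ∘L G) (hGD' : G ∘L adjoint D = adjoint D ∘L G)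
    (hP : IsSelfAdjoint P) (hPP : P ∘L P = P) (x : E) :
    re ⟪G (D x), D x⟫_𝕜 + re ⟪adjoint D x, G (adjoint D x)⟫_𝕜 = ‖x‖ ^ 2 - ‖P x‖ ^ 2 := by
  have hGDx : G (D x) = D (G x) := congr($hGD x)
  have hGD'x : G (adjoint D x) = adjoint D (G x) := congr($hGD' x)
  have h := inner_apply_add_inner_adjoint_apply D x (G x)
  rw [add_comm (adjoint D (D (G x))), laplacian_green_apply hHodge, inner_sub_right,
    ← hGDx, ← hGD'x] at h
  have h' := congr(re $h)
  rw [map_add, map_sub, inner_re_symm (D x), re_inner_apply_self_eq_norm_sq hP hPP,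
    inner_self_eq_norm_sq] at h'
  exact h'

end ContinuousLinearMap

theorem stmt_8_general {H : Type*} [NormedAddCommGroup H] [InnerProductSpace ℂ H] [CompleteSpace H]
    (G H₀ Db Dp Dbs Dps : H →L[ℂ] H)
    (hDbs : Dbs = ContinuousLinearMap.adjoint Db)
    (hDps : Dps = ContinuousLinearMap.adjoint Dp)
    (hGnonneg : ∀ x : H, 0 ≤ (inner ℂ x (G x) : ℂ).re)
    (hH₀sa : IsSelfAdjoint H₀) (hH₀idem : H₀.comp H₀ = H₀)
    (hHodgeb : Db.comp (Dbs.comp G) + Dbs.comp (Db.comp G) = 1 - H₀)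
    (hHodgep : Dp.comp (Dps.comp G) + Dps.comp (Dp.comp G) = 1 - H₀)
    (hGDp : G.comp Dp = Dp.comp G) (hGDps : G.comp Dps = Dps.comp G)
    (hH₀Dp : H₀.comp Dp = 0) :
    ∀ g : H,
      ‖Dbs (G (Dp g))‖ ^ 2 =
        ‖g‖ ^ 2 - ‖H₀ g‖ ^ 2 - (inner ℂ (Dps g) (G (Dps g)) : ℂ).re - ‖Db (G (Dp g))‖ ^ 2 ∧
      ‖Dbs (G (Dp g))‖ ^ 2 ≤ ‖g‖ ^ 2 := by
  intro g
  subst hDbs hDps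
  have hbar := norm_sq_adjoint_green_add_norm_sq_green hHodgeb (y := Dp g)
    (by simpa using congr($hH₀Dp g))
  have hsplit := re_inner_green_add_re_inner_adjoint_green hHodgep hGDp hGDps hH₀sa hH₀idem g
  simp only [RCLike.re_to_complex] at hbar hsplit
  have hpos := hGnonneg (adjoint Dp g)
  refine ⟨by linarith, ?_⟩
  linarith [sq_nonneg ‖Db (G (Dp g))‖, sq_nonneg ‖H₀ g‖]

/-- Abstract quasi-isometry computation (Theorem 3.2): with the Hodge identities for the
common Green operator `G` and harmonic projection `H₀`,
`‖∂̄*G∂g‖² = ‖g‖² - ‖H₀g‖² - ⟪∂*g, G∂*g⟫ - ‖∂̄G∂g‖²`, hence `‖∂̄*G∂g‖² ≤ ‖g‖²`. -/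
theorem stmt_8 {H : Type*} [NormedAddCommGroup H] [InnerProductSpace ℂ H] [CompleteSpace H]
    (G H₀ Db Dp Dbs Dps : H →L[ℂ] H)
    (hDbs : Dbs = ContinuousLinearMap.adjoint Db)
    (hDps : Dps = ContinuousLinearMap.adjoint Dp)
    (hGsa : IsSelfAdjoint G) (hGnonneg : ∀ x : H, 0 ≤ (inner ℂ x (G x) : ℂ).re)
    (hH₀sa : IsSelfAdjoint H₀) (hH₀idem : H₀.comp H₀ = H₀)
    (hHodgeb : Db.comp (Dbs.comp G) + Dbs.comp (Db.comp G) = 1 - H₀)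
    (hGDb : G.comp Db = Db.comp G) (hGDbs : G.comp Dbs = Dbs.comp G)
    (hH₀Db : H₀.comp Db = 0) (hDbH₀ : Db.comp H₀ = 0)
    (hH₀Dbs : H₀.comp Dbs = 0) (hDbsH₀ : Dbs.comp H₀ = 0)
    (hHodgep : Dp.comp (Dps.comp G) + Dps.comp (Dp.comp G) = 1 - H₀)
    (hGDp : G.comp Dp = Dp.comp G) (hGDps : G.comp Dps = Dps.comp G)
    (hH₀Dp : H₀.comp Dp = 0) (hDpH₀ : Dp.comp H₀ = 0)
    (hH₀Dps : H₀.comp Dps = 0) (hDpsH₀ : Dps.comp H₀ = 0) :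
    ∀ g : H,
      ‖Dbs (G (Dp g))‖ ^ 2 =
        ‖g‖ ^ 2 - ‖H₀ g‖ ^ 2 - (inner ℂ (Dps g) (G (Dps g)) : ℂ).re - ‖Db (G (Dp g))‖ ^ 2 ∧
      ‖Dbs (G (Dp g))‖ ^ 2 ≤ ‖g‖ ^ 2 :=
  stmt_8_general G H₀ Db Dp Dbs Dps hDbs hDps hGnonneg hH₀sa hH₀idem hHodgeb hHodgep hGDp hGDps
    hH₀Dp
end

section
/- Let A be a graded-commutative algebra (the forms) and let d, i_φ be operators with d of degree +1 and i_φ of degree 0 in total degree, satisfying the recursion d(i_φ^k η) = k i_φ^{k-1} d(i_φ η) - (k-1) i_φ^k dη - (k(k-1)/2) i_φ^{k-2} i_{[φ,φ]} η for all k ≥ 2 and all η, together with the k=0,1 base identities. Then e^{-i_φ} ∘ d ∘ e^{i_φ} = d - L_φ - i_{(1/2)[φ,φ]}, where L_φ = -d∘i_φ + i_φ∘d. -/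
/-!
Since `i_φ` is nilpotent the truncated series are genuine exponentials, so `e^{-i_φ} e^{i_φ} = 1`
and it suffices to show `d e^{i_φ} = e^{i_φ} (d + d i_φ - i_φ d - ½ i_{[φ,φ]})`. Expanding
`d e^{i_φ}` termwise with the recursion, the coefficients `k / k!` and `k (k - 1) / (2 k!)` shift the
summation index down by one and by two, and each resulting sum is again `e^{i_φ}` times a single
operator.
-/

open Finset

def truncExp (𝕜 : Type*) {R : Type*} [Field 𝕜] [Ring R] [Module 𝕜 R] (N : ℕ) (x : R) : R :=
  ∑ k ∈ range N, (k.factorial : 𝕜)⁻¹ • x ^ k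

section Coefficients

variable {𝕜 V : Type*} [Field 𝕜] [CharZero 𝕜] [AddCommGroup V] [Module 𝕜 V]

lemma inv_factorial_succ_mul_succ (k : ℕ) :
    ((k + 1).factorial : 𝕜)⁻¹ * (k + 1 : ℕ) = (k.factorial : 𝕜)⁻¹ := by
  have : ((k + 1 : ℕ) : 𝕜) ≠ 0 := Nat.cast_ne_zero.2 k.succ_ne_zero
  rw [Nat.factorial_succ, Nat.cast_mul, mul_inv, mul_comm, ← mul_assoc, mul_inv_cancel₀ this,
    one_mul]

lemma sum_range_succ_inv_factorial_mul_smul (M : ℕ) (g : ℕ → V) :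
    ∑ k ∈ range (M + 1), ((k.factorial : 𝕜)⁻¹ * k) • g k
      = ∑ k ∈ range M, (k.factorial : 𝕜)⁻¹ • g (k + 1) := by
  rw [sum_range_succ']
  simp only [Nat.cast_zero, mul_zero, zero_smul, add_zero, inv_factorial_succ_mul_succ]

lemma sum_range_add_two_inv_factorial_mul_choose_two_smul (M : ℕ) (g : ℕ → V) :
    ∑ k ∈ range (M + 2), ((k.factorial : 𝕜)⁻¹ * (k * (k - 1) / 2)) • g k
      = (2 : 𝕜)⁻¹ • ∑ k ∈ range M, (k.factorial : 𝕜)⁻¹ • g (k + 2) := by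
  have hcoeff (k : ℕ) : ((k + 2).factorial : 𝕜)⁻¹ * ((k + 2 : ℕ) * ((k + 2 : ℕ) - 1) / 2)
      = 2⁻¹ * (k.factorial : 𝕜)⁻¹ := by
    have h1 := inv_factorial_succ_mul_succ (𝕜 := 𝕜) (k + 1)
    have h0 := inv_factorial_succ_mul_succ (𝕜 := 𝕜) k
    push_cast at h0 h1 ⊢
    linear_combination ((k + 1 : 𝕜) / 2) * h1 + 2⁻¹ * h0
  rw [sum_range_succ', sum_range_succ', smul_sum]
  simp only [hcoeff, mul_smul]
  simp

end Coefficients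

section TruncExp

variable {𝕜 R : Type*} [Field 𝕜] [Ring R] [Algebra 𝕜 R]

lemma truncExp_eq_of_le {N M : ℕ} {x : R} (hx : x ^ N = 0) (h : N ≤ M) :
    truncExp 𝕜 M x = truncExp 𝕜 N x := by
  refine (sum_subset (range_subset_range.2 h) fun k _ hk => ?_).symm
  rw [pow_eq_zero_of_le (by simpa using hk) hx, smul_zero]

lemma truncExp_neg_mul_truncExp [CharZero 𝕜] {N : ℕ} {x : R} (hx : x ^ N = 0) :
    truncExp 𝕜 N (-x) * truncExp 𝕜 N x = 1 := by
  -- Mathlib's nilpotent exponential lives in `ℚ`-modules; restrict scalars along `ℚ → 𝕜`.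
  let _ : Module ℚ R := Module.compHom R (algebraMap ℚ 𝕜)
  have h_eq_exp {y : R} (hy : y ^ N = 0) : truncExp 𝕜 N y = IsNilpotent.exp y := by
    rw [IsNilpotent.exp_eq_sum hy]
    refine sum_congr rfl fun k _ => ?_
    change _ = algebraMap ℚ 𝕜 (k.factorial : ℚ)⁻¹ • y ^ k
    simp
  rw [h_eq_exp hx, h_eq_exp (by rw [neg_pow, hx, mul_zero])]
  exact IsNilpotent.exp_neg_mul_exp_self ⟨N, hx⟩

lemma truncExp_mul (N : ℕ) (x y : R) :
    truncExp 𝕜 N x * y = ∑ k ∈ range N, (k.factorial : 𝕜)⁻¹ • (x ^ k * y) := by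
  simp only [truncExp, sum_mul, smul_mul_assoc]

lemma commute_truncExp_self (N : ℕ) (x : R) : Commute (truncExp 𝕜 N x) x :=
  Commute.sum_left _ _ _ fun k _ => ((Commute.pow_left rfl k).smul_left _)

end TruncExp

section Conjugation

variable {𝕜 R : Type*} [Field 𝕜] [CharZero 𝕜] [Ring R] [Algebra 𝕜 R]

lemma mul_truncExp_of_pow_eq_zero {N : ℕ} {d x b : R} (hx : x ^ N = 0)
    (hrec : ∀ k : ℕ, 2 ≤ k →
      d * x ^ k = (k : 𝕜) • (x ^ (k - 1) * (d * x)) - ((k : 𝕜) - 1) • (x ^ k * d)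
        - ((k : 𝕜) * ((k : 𝕜) - 1) / 2) • (x ^ (k - 2) * b)) :
    d * truncExp 𝕜 N x = truncExp 𝕜 N x * (d + d * x - x * d - (2 : 𝕜)⁻¹ • b) := by
  have hrec_all : ∀ k : ℕ, d * x ^ k = (k : 𝕜) • (x ^ (k - 1) * (d * x))
      - ((k : 𝕜) - 1) • (x ^ k * d) - ((k : 𝕜) * ((k : 𝕜) - 1) / 2) • (x ^ (k - 2) * b)
    | 0 | 1 => by norm_num
    | k + 2 => hrec (k + 2) (by omega)
  have hterm (k : ℕ) : (k.factorial : 𝕜)⁻¹ • (d * x ^ k)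
      = ((k.factorial : 𝕜)⁻¹ * k) • (x ^ (k - 1) * (d * x))
        - ((k.factorial : 𝕜)⁻¹ * k) • (x ^ k * d) + (k.factorial : 𝕜)⁻¹ • (x ^ k * d)
        - ((k.factorial : 𝕜)⁻¹ * (k * (k - 1) / 2)) • (x ^ (k - 2) * b) := by
    rw [hrec_all k]
    simp only [smul_sub, smul_smul, mul_sub, sub_smul, mul_one]
    abel
  have hx_mul (M : ℕ) : x * truncExp 𝕜 M x * d
      = ∑ k ∈ range M, (k.factorial : 𝕜)⁻¹ • (x ^ (k + 1) * d) := by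
    simp only [truncExp, mul_sum, sum_mul, mul_smul_comm, smul_mul_assoc, pow_succ', mul_assoc]
  calc d * truncExp 𝕜 N x = ∑ k ∈ range (N + 2), (k.factorial : 𝕜)⁻¹ • (d * x ^ k) := by
        rw [← truncExp_eq_of_le hx (by omega : N ≤ N + 2), truncExp, mul_sum]
        simp only [mul_smul_comm]
    _ = truncExp 𝕜 (N + 1) x * (d * x) - x * truncExp 𝕜 (N + 1) x * d
          + truncExp 𝕜 (N + 2) x * d - (2 : 𝕜)⁻¹ • (truncExp 𝕜 N x * b) := by
        simp only [hterm, sum_add_distrib, sum_sub_distrib, sum_range_succ_inv_factorial_mul_smul,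
          sum_range_add_two_inv_factorial_mul_choose_two_smul, truncExp_mul, hx_mul,
          Nat.add_sub_cancel]
    _ = truncExp 𝕜 N x * (d + d * x - x * d - (2 : 𝕜)⁻¹ • b) := by
        rw [truncExp_eq_of_le hx (by omega : N ≤ N + 1),
          truncExp_eq_of_le hx (by omega : N ≤ N + 2), ← (commute_truncExp_self N x).eq]
        simp only [mul_add, mul_sub, mul_smul_comm, mul_assoc]
        abel

end Conjugation

/-- Abstract version of Proposition 2.5: if `d` and the nilpotent contraction `i_φ` satisfy
the inductive identities `d(i_φ^k η) = k i_φ^{k-1} d(i_φ η) - (k-1) i_φ^k dη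
- (k(k-1)/2) i_φ^{k-2} i_{[φ,φ]} η`, then `e^{-i_φ} ∘ d ∘ e^{i_φ} = d - L_φ - (1/2) i_{[φ,φ]}`
where `L_φ = -d ∘ i_φ + i_φ ∘ d`. -/
theorem stmt_10 {A : Type*} [AddCommGroup A] [Module ℂ A]
    (d iφ ibr : Module.End ℂ A) (N : ℕ) (hnil : iφ ^ N = 0)
    (hrec : ∀ k : ℕ, 2 ≤ k →
      d * iφ ^ k = (k : ℂ) • (iφ ^ (k - 1) * (d * iφ)) - ((k : ℂ) - 1) • (iφ ^ k * d)
        - ((k : ℂ) * ((k : ℂ) - 1) / 2) • (iφ ^ (k - 2) * ibr))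
    (E E' : Module.End ℂ A)
    (hE : E = ∑ k ∈ Finset.range N, (k.factorial : ℂ)⁻¹ • iφ ^ k)
    (hE' : E' = ∑ k ∈ Finset.range N, (k.factorial : ℂ)⁻¹ • (-iφ) ^ k)
    (L : Module.End ℂ A) (hL : L = -(d * iφ) + iφ * d) :
    E' * d * E = d - L - (2 : ℂ)⁻¹ • ibr := by
  change E = truncExp ℂ N iφ at hE
  change E' = truncExp ℂ N (-iφ) at hE'
  rw [hE, hE', mul_assoc, mul_truncExp_of_pow_eq_zero hnil hrec, ← mul_assoc,
    truncExp_neg_mul_truncExp hnil, one_mul, hL]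
  abel
end

section
/- Let M be a complex manifold of dimension n and φ an integrable Beltrami differential on M. For an (n,0)-form Ω on M, the (n,0)-form e^{i_φ}Ω on M_φ is holomorphic (i.e. ∂̄_φ-closed) if and only if ∂̄Ω + ∂(φ⌟Ω) = 0. -/
/-- Abstract version of Corollary 2.7: for an integrable Beltrami differential with
`e^{-i_φ} d e^{i_φ} = d + ∂ i_φ - i_φ ∂` and an `(n,0)`-form `Ω` (so `∂Ω = 0`),
the form `e^{i_φ}Ω` is holomorphic on `M_φ` (i.e. `d(e^{i_φ}Ω) = 0`) iff
`∂̄Ω + ∂(φ⌟Ω) = 0`. -/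
theorem stmt_12 {A : Type*} [AddCommGroup A] [Module ℂ A]
    (p q iφ : Module.End ℂ A) (E E' : Module.End ℂ A)
    (hE'E : E' * E = 1) (hEE' : E * E' = 1)
    (hconj : E' * (p + q) * E = (p + q) + p * iφ - iφ * p)
    (Ω : A) (hΩ : p Ω = 0) :
    (p + q) (E Ω) = 0 ↔ q Ω + p (iφ Ω) = 0 := by
  have key : E' ((p + q) (E Ω)) = q Ω + p (iφ Ω) := by
    have h := congrArg (fun f : Module.End ℂ A => f Ω) hconj
    simp only [Module.End.mul_apply, LinearMap.add_apply, LinearMap.sub_apply, hΩ,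
      map_zero] at h ⊢
    simpa [hΩ] using h
  constructor
  · intro h
    rw [← key, h, map_zero]
  · intro h
    have h2 : E (E' ((p + q) (E Ω))) = E 0 := by rw [key, h]
    have : E (E' ((p + q) (E Ω))) = (p + q) (E Ω) := by
      have := congrArg (fun f : Module.End ℂ A => f ((p + q) (E Ω))) hEE'
      simpa [Module.End.mul_apply] using this
    rw [this, map_zero] at h2
    exact h2
end
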